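/- arXiv:0912.4803 — 4 statements merged into one kernel-verified Lean document; each statement's English description precedes it below -/
import Mathlib

section
/- For any graph obtained from a single vertex labeled -2 by repeatedly either (i) attaching a new leaf vertex to an existing vertex v, with new label a(v)+1, or (ii) subdividing an existing edge {u,v} by a new vertex with label a(u)+a(v), any two adjacent vertices have coprime labels: gcd(a_i, a_j) = 1. -/
/-- Labeled trees built by the blowup process: start from a single vertex
labeled `-2`; either attach a new leaf `w` to `v` with label `a(v)+1`, or
subdivide an edge `{u,v}` by a new vertex `w` with label `a(u)+a(v)`. -/
inductive Blowup : Finset ℕ → (ℕ → ℕ → Prop) → (ℕ → ℤ) → Prop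
  | base (v : ℕ) : Blowup {v} (fun _ _ => False) (fun _ => -2)
  | leaf {V : Finset ℕ} {adj : ℕ → ℕ → Prop} {lab : ℕ → ℤ} (v w : ℕ)
      (hv : v ∈ V) (hw : w ∉ V) (h : Blowup V adj lab) :
      Blowup (insert w V)
        (fun x y => adj x y ∨ (x = v ∧ y = w) ∨ (x = w ∧ y = v))
        (Function.update lab w (lab v + 1))
  | subdiv {V : Finset ℕ} {adj : ℕ → ℕ → Prop} {lab : ℕ → ℤ} (u v w : ℕ)
      (hu : u ∈ V) (hv : v ∈ V) (huv : adj u v) (hw : w ∉ V)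
      (h : Blowup V adj lab) :
      Blowup (insert w V)
        (fun x y => (adj x y ∧ ¬((x = u ∧ y = v) ∨ (x = v ∧ y = u))) ∨
          (x = u ∧ y = w) ∨ (x = w ∧ y = u) ∨ (x = v ∧ y = w) ∨ (x = w ∧ y = v))
        (Function.update lab w (lab u + lab v))

/-!
Adjacent labels stay coprime under both steps, by induction: a new leaf labeled `a + 1` is coprime
to its neighbour's label `a`, and subdividing an edge with coprime labels `a, b` creates the label
`a + b`, coprime to both since `gcd (a, a + b) = gcd (b, a + b) = gcd (a, b)`. Surviving edges join
old vertices, whose labels do not change.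
-/

open Function

section update

variable {α R : Type*} [DecidableEq α] [CommSemiring R] {lab : α → R} {w : α} {c : R}

lemma isCoprime_update_of_ne {x y : α} (hx : x ≠ w) (hy : y ≠ w)
    (h : IsCoprime (lab x) (lab y)) : IsCoprime (update lab w c x) (update lab w c y) := by
  rwa [update_of_ne hx, update_of_ne hy]

lemma isCoprime_update_self_right {p : α} (hp : p ≠ w) (h : IsCoprime (lab p) c) :
    IsCoprime (update lab w c p) (update lab w c w) := by
  rwa [update_of_ne hp, update_self]

end update

namespace Blowup

variable {V : Finset ℕ} {adj : ℕ → ℕ → Prop} {lab : ℕ → ℤ}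

theorem mem_of_adj (h : Blowup V adj lab) {x y : ℕ} (hxy : adj x y) : x ∈ V ∧ y ∈ V := by
  induction h with
  | base => exact hxy.elim
  | leaf v w hv _ _ ih =>
    rcases hxy with hxy | ⟨rfl, rfl⟩ | ⟨rfl, rfl⟩
    · exact (ih hxy).imp (Finset.mem_insert_of_mem ·) (Finset.mem_insert_of_mem ·)
    · exact ⟨Finset.mem_insert_of_mem hv, Finset.mem_insert_self _ _⟩
    · exact ⟨Finset.mem_insert_self _ _, Finset.mem_insert_of_mem hv⟩
  | subdiv u v w hu hv _ _ _ ih =>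
    rcases hxy with ⟨hxy, -⟩ | ⟨rfl, rfl⟩ | ⟨rfl, rfl⟩ | ⟨rfl, rfl⟩ | ⟨rfl, rfl⟩
    · exact (ih hxy).imp (Finset.mem_insert_of_mem ·) (Finset.mem_insert_of_mem ·)
    · exact ⟨Finset.mem_insert_of_mem hu, Finset.mem_insert_self _ _⟩
    · exact ⟨Finset.mem_insert_self _ _, Finset.mem_insert_of_mem hu⟩
    · exact ⟨Finset.mem_insert_of_mem hv, Finset.mem_insert_self _ _⟩
    · exact ⟨Finset.mem_insert_self _ _, Finset.mem_insert_of_mem hv⟩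

lemma isCoprime_update_of_adj (h : Blowup V adj lab)
    (hcop : ∀ {x y}, adj x y → IsCoprime (lab x) (lab y)) {w : ℕ} (hw : w ∉ V) (c : ℤ)
    {x y : ℕ} (hxy : adj x y) : IsCoprime (update lab w c x) (update lab w c y) :=
  have ⟨hx, hy⟩ := h.mem_of_adj hxy
  isCoprime_update_of_ne (ne_of_mem_of_not_mem hx hw) (ne_of_mem_of_not_mem hy hw) (hcop hxy)

theorem isCoprime_of_adj (h : Blowup V adj lab) {x y : ℕ} (hxy : adj x y) :
    IsCoprime (lab x) (lab y) := by
  induction h generalizing x y with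
  | base => exact hxy.elim
  | @leaf V adj lab v w hv hw h ih =>
    have hvw : IsCoprime (update lab w (lab v + 1) v) (update lab w (lab v + 1) w) :=
      isCoprime_update_self_right (ne_of_mem_of_not_mem hv hw)
        (IsCoprime.add_one_right_of_dvd dvd_rfl)
    rcases hxy with hxy | ⟨rfl, rfl⟩ | ⟨rfl, rfl⟩
    · exact h.isCoprime_update_of_adj ih hw _ hxy
    · exact hvw
    · exact hvw.symm
  | @subdiv V adj lab u v w hu hv huv hw h ih =>
    have huw : IsCoprime (update lab w (lab u + lab v) u) (update lab w (lab u + lab v) w) :=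
      isCoprime_update_self_right (ne_of_mem_of_not_mem hu hw)
        (by simpa using (ih huv).mul_add_left_right 1)
    have hvw : IsCoprime (update lab w (lab u + lab v) v) (update lab w (lab u + lab v) w) :=
      isCoprime_update_self_right (ne_of_mem_of_not_mem hv hw)
        (by simpa using (ih huv).symm.add_mul_left_right 1)
    rcases hxy with ⟨hxy, -⟩ | ⟨rfl, rfl⟩ | ⟨rfl, rfl⟩ | ⟨rfl, rfl⟩ | ⟨rfl, rfl⟩
    · exact h.isCoprime_update_of_adj ih hw _ hxy
    · exact huw
    · exact huw.symm
    · exact hvw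
    · exact hvw.symm

end Blowup

theorem adjacent_labels_coprime {V : Finset ℕ} {adj : ℕ → ℕ → Prop} {lab : ℕ → ℤ}
    (h : Blowup V adj lab) :
    ∀ x y, x ∈ V → y ∈ V → adj x y → Int.gcd (lab x) (lab y) = 1 := by
  intro x y _ _ hxy
  exact Int.isCoprime_iff_gcd_eq_one.mp (h.isCoprime_of_adj hxy)
end

section
/- In any graph obtained by the inductive blowup-labeling process, no edge joins a vertex with a strictly negative label to a vertex with a strictly positive label. -/
lemma blowup_adj_mem {V : Finset ℕ} {adj : ℕ → ℕ → Prop} {lab : ℕ → ℤ}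
    (h : Blowup V adj lab) : ∀ x y, adj x y → x ∈ V ∧ y ∈ V := by
  induction h with
  | base v => intro x y hxy; exact hxy.elim
  | @leaf V adj lab v w hv hw h ih =>
    intro x y hxy
    rcases hxy with h1 | ⟨rfl, rfl⟩ | ⟨rfl, rfl⟩
    · exact ⟨Finset.mem_insert_of_mem (ih _ _ h1).1, Finset.mem_insert_of_mem (ih _ _ h1).2⟩
    · exact ⟨Finset.mem_insert_of_mem hv, Finset.mem_insert_self _ _⟩
    · exact ⟨Finset.mem_insert_self _ _, Finset.mem_insert_of_mem hv⟩
  | @subdiv V adj lab u v w hu hv huv hw h ih =>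
    intro x y hxy
    rcases hxy with ⟨h1, -⟩ | ⟨rfl, rfl⟩ | ⟨rfl, rfl⟩ | ⟨rfl, rfl⟩ | ⟨rfl, rfl⟩
    · exact ⟨Finset.mem_insert_of_mem (ih _ _ h1).1, Finset.mem_insert_of_mem (ih _ _ h1).2⟩
    · exact ⟨Finset.mem_insert_of_mem hu, Finset.mem_insert_self _ _⟩
    · exact ⟨Finset.mem_insert_self _ _, Finset.mem_insert_of_mem hu⟩
    · exact ⟨Finset.mem_insert_of_mem hv, Finset.mem_insert_self _ _⟩
    · exact ⟨Finset.mem_insert_self _ _, Finset.mem_insert_of_mem hv⟩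

lemma blowup_adj_symm {V : Finset ℕ} {adj : ℕ → ℕ → Prop} {lab : ℕ → ℤ}
    (h : Blowup V adj lab) : ∀ x y, adj x y → adj y x := by
  induction h with
  | base v => intro x y hxy; exact hxy.elim
  | @leaf V adj lab v w hv hw h ih =>
    intro x y hxy
    rcases hxy with h1 | ⟨rfl, rfl⟩ | ⟨rfl, rfl⟩
    · exact Or.inl (ih _ _ h1)
    · exact Or.inr (Or.inr ⟨rfl, rfl⟩)
    · exact Or.inr (Or.inl ⟨rfl, rfl⟩)
  | @subdiv V adj lab u v w hu hv huv hw h ih =>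
    intro x y hxy
    rcases hxy with ⟨h1, h2⟩ | ⟨rfl, rfl⟩ | ⟨rfl, rfl⟩ | ⟨rfl, rfl⟩ | ⟨rfl, rfl⟩
    · refine Or.inl ⟨ih _ _ h1, fun hc => h2 ?_⟩; tauto
    · exact Or.inr (Or.inr (Or.inl ⟨rfl, rfl⟩))
    · exact Or.inr (Or.inl ⟨rfl, rfl⟩)
    · exact Or.inr (Or.inr (Or.inr (Or.inr ⟨rfl, rfl⟩)))
    · exact Or.inr (Or.inr (Or.inr (Or.inl ⟨rfl, rfl⟩)))

lemma blowup_key {V : Finset ℕ} {adj : ℕ → ℕ → Prop} {lab : ℕ → ℤ}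
    (h : Blowup V adj lab) : ∀ x y, adj x y → ¬(lab x < 0 ∧ 0 < lab y) := by
  induction h with
  | base v => intro x y hxy; exact hxy.elim
  | @leaf V adj lab v w hv hw h ih =>
    intro x y hxy
    have hne : ∀ z, z ∈ V → z ≠ w := fun z hz hzw => hw (hzw ▸ hz)
    rcases hxy with h1 | ⟨rfl, rfl⟩ | ⟨rfl, rfl⟩
    · obtain ⟨hx, hy⟩ := blowup_adj_mem h _ _ h1
      simpa [Function.update_of_ne (hne _ hx), Function.update_of_ne (hne _ hy)]
        using ih _ _ h1
    · simp only [Function.update_self, Function.update_of_ne (hne _ hv)]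
      omega
    · simp only [Function.update_self, Function.update_of_ne (hne _ hv)]
      omega
  | @subdiv V adj lab u v w hu hv huv hw h ih =>
    intro x y hxy
    have hne : ∀ z, z ∈ V → z ≠ w := fun z hz hzw => hw (hzw ▸ hz)
    have huv' := ih _ _ huv
    have hvu' := ih _ _ (blowup_adj_symm h _ _ huv)
    rcases hxy with ⟨h1, -⟩ | ⟨rfl, rfl⟩ | ⟨rfl, rfl⟩ | ⟨rfl, rfl⟩ | ⟨rfl, rfl⟩
    · obtain ⟨hx, hy⟩ := blowup_adj_mem h _ _ h1
      simpa [Function.update_of_ne (hne _ hx), Function.update_of_ne (hne _ hy)]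
        using ih _ _ h1
    · simp only [Function.update_self, Function.update_of_ne (hne _ hu)]
      omega
    · simp only [Function.update_self, Function.update_of_ne (hne _ hu)] at *
      omega
    · simp only [Function.update_self, Function.update_of_ne (hne _ hv)] at *
      omega
    · simp only [Function.update_self, Function.update_of_ne (hne _ hv)] at *
      omega

theorem no_negative_adjacent_positive {V : Finset ℕ} {adj : ℕ → ℕ → Prop} {lab : ℕ → ℤ}
    (h : Blowup V adj lab) :
    ∀ x y, x ∈ V → y ∈ V → adj x y → ¬(lab x < 0 ∧ 0 < lab y) := by
  intro x y _ _ hxy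
  exact blowup_key h x y hxy
end

section
/- In any graph obtained by the inductive blowup-labeling process, the set of vertices with strictly negative labels induces a connected subgraph. -/
/-!
Induct on the blowup process. Every old negative vertex keeps its label, and the new vertex `w`
is negative only if it has a negative neighbour: for a leaf, `a(v) + 1 < 0` forces `a(v) < 0`;
for a subdivision, `a(u) + a(v) < 0` forces `a(u) < 0` or `a(v) < 0`. The only edge that
disappears is `{u, v}`, and if both ends are negative so is `w`, so the path `u - w - v`
replaces it inside the negative part.
-/

open Relation

def ConnectedOn {α : Type*} (r : α → α → Prop) (P : α → Prop) : Prop :=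
  ∀ x y, P x → P y → ReflTransGen r x y

theorem ConnectedOn.of_attach {α : Type*} {r r' : α → α → Prop} {P Q : α → Prop} (w : α)
    (hP : ConnectedOn r P) (hsim : r ≤ ReflTransGen r')
    (hQ : ∀ x, Q x → x = w ∨ P x) (hw : Q w → ∃ z, P z ∧ r' w z ∧ r' z w) :
    ConnectedOn r' Q := by
  have hlift : ConnectedOn r' P := fun x y hx hy => reflTransGen_closed hsim x y (hP x y hx hy)
  intro x y hx hy
  rcases hQ x hx with rfl | hxP <;> rcases hQ y hy with rfl | hyP
  · rfl
  · obtain ⟨z, hzP, hxz, -⟩ := hw hx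
    exact (hlift z y hzP hyP).head hxz
  · obtain ⟨z, hzP, -, hzy⟩ := hw hy
    exact (hlift x z hxP hzP).tail hzy
  · exact hlift x y hxP hyP

def negAdj (V : Finset ℕ) (adj : ℕ → ℕ → Prop) (lab : ℕ → ℤ) (a b : ℕ) : Prop :=
  a ∈ V ∧ b ∈ V ∧ adj a b ∧ lab a < 0 ∧ lab b < 0

def IsNeg (V : Finset ℕ) (lab : ℕ → ℤ) (x : ℕ) : Prop :=
  x ∈ V ∧ lab x < 0

section BlowupStep

variable {V : Finset ℕ} {adj adj' : ℕ → ℕ → Prop} {lab : ℕ → ℤ} {w : ℕ} {c : ℤ}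

theorem negAdj_of_isNeg {a b : ℕ} (ha : IsNeg V lab a) (hb : IsNeg V lab b) (hab : adj a b) :
    negAdj V adj lab a b :=
  ⟨ha.1, hb.1, hab, ha.2, hb.2⟩

theorem update_eq_of_mem (hw : w ∉ V) {a : ℕ} (ha : a ∈ V) :
    Function.update lab w c a = lab a :=
  Function.update_of_ne (ne_of_mem_of_not_mem ha hw) _ _

theorem isNeg_update_insert (hw : w ∉ V) {a : ℕ} (ha : IsNeg V lab a) :
    IsNeg (insert w V) (Function.update lab w c) a :=
  ⟨Finset.mem_insert_of_mem ha.1, by rw [update_eq_of_mem hw ha.1]; exact ha.2⟩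

theorem isNeg_update_insert_self (hc : c < 0) :
    IsNeg (insert w V) (Function.update lab w c) w :=
  ⟨Finset.mem_insert_self w V, by rwa [Function.update_self]⟩

theorem neg_of_isNeg_update_self (hw : IsNeg (insert w V) (Function.update lab w c) w) : c < 0 := by
  simpa using hw.2

theorem eq_or_isNeg_of_isNeg_update_insert (hw : w ∉ V) {x : ℕ}
    (hx : IsNeg (insert w V) (Function.update lab w c) x) : x = w ∨ IsNeg V lab x := by
  obtain ⟨hxV, hxneg⟩ := hx
  rcases Finset.mem_insert.mp hxV with rfl | hxV
  · exact Or.inl rfl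
  · exact Or.inr ⟨hxV, by rwa [update_eq_of_mem hw hxV] at hxneg⟩

theorem negAdj_update_insert (hw : w ∉ V) {a b : ℕ} (hab : negAdj V adj lab a b)
    (hab' : adj' a b) : negAdj (insert w V) adj' (Function.update lab w c) a b :=
  negAdj_of_isNeg (isNeg_update_insert hw ⟨hab.1, hab.2.2.2.1⟩)
    (isNeg_update_insert hw ⟨hab.2.1, hab.2.2.2.2⟩) hab'

theorem exists_isNeg_negAdj_update_insert (hw : w ∉ V)
    (hwneg : IsNeg (insert w V) (Function.update lab w c) w) {z : ℕ} (hz : IsNeg V lab z)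
    (hwz : adj' w z) (hzw : adj' z w) :
    ∃ z, IsNeg V lab z ∧ negAdj (insert w V) adj' (Function.update lab w c) w z ∧
      negAdj (insert w V) adj' (Function.update lab w c) z w :=
  have hz' := isNeg_update_insert (c := c) hw hz
  ⟨z, hz, negAdj_of_isNeg hwneg hz' hwz, negAdj_of_isNeg hz' hwneg hzw⟩

theorem connectedOn_leaf {v : ℕ} (hv : v ∈ V) (hw : w ∉ V)
    (h : ConnectedOn (negAdj V adj lab) (IsNeg V lab)) :
    ConnectedOn
      (negAdj (insert w V) (fun x y => adj x y ∨ (x = v ∧ y = w) ∨ (x = w ∧ y = v))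
        (Function.update lab w (lab v + 1)))
      (IsNeg (insert w V) (Function.update lab w (lab v + 1))) := by
  refine h.of_attach w (fun a b hab => .single (negAdj_update_insert hw hab (Or.inl hab.2.2.1)))
    (fun x => eq_or_isNeg_of_isNeg_update_insert hw) fun hwneg => ?_
  have hvneg : lab v < 0 := by linarith [neg_of_isNeg_update_self hwneg]
  exact exists_isNeg_negAdj_update_insert hw hwneg ⟨hv, hvneg⟩ (by simp) (by simp)

theorem connectedOn_subdiv {u v : ℕ} (hu : u ∈ V) (hv : v ∈ V) (hw : w ∉ V)
    (h : ConnectedOn (negAdj V adj lab) (IsNeg V lab)) :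
    ConnectedOn
      (negAdj (insert w V)
        (fun x y => (adj x y ∧ ¬((x = u ∧ y = v) ∨ (x = v ∧ y = u))) ∨
          (x = u ∧ y = w) ∨ (x = w ∧ y = u) ∨ (x = v ∧ y = w) ∨ (x = w ∧ y = v))
        (Function.update lab w (lab u + lab v)))
      (IsNeg (insert w V) (Function.update lab w (lab u + lab v))) := by
  refine h.of_attach w (fun a b hab => ?_) (fun x => eq_or_isNeg_of_isNeg_update_insert hw)
    fun hwneg => ?_
  · by_cases huv : (a = u ∧ b = v) ∨ (a = v ∧ b = u)
    · obtain ⟨ha, hb, -, hna, hnb⟩ := hab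
      have hwneg : IsNeg (insert w V) (Function.update lab w (lab u + lab v)) w := by
        refine isNeg_update_insert_self ?_
        rcases huv with ⟨rfl, rfl⟩ | ⟨rfl, rfl⟩ <;> linarith
      have ha' := isNeg_update_insert (c := lab u + lab v) hw ⟨ha, hna⟩
      have hb' := isNeg_update_insert (c := lab u + lab v) hw ⟨hb, hnb⟩
      rcases huv with ⟨rfl, rfl⟩ | ⟨rfl, rfl⟩ <;>
        exact .head (negAdj_of_isNeg ha' hwneg (by simp))
          (.single (negAdj_of_isNeg hwneg hb' (by simp)))
    · exact .single (negAdj_update_insert hw hab (Or.inl ⟨hab.2.2.1, huv⟩))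
  · have hsum := neg_of_isNeg_update_self hwneg
    rcases lt_or_ge (lab u) 0 with hlu | hlu
    · exact exists_isNeg_negAdj_update_insert hw hwneg ⟨hu, hlu⟩ (by simp) (by simp)
    · exact exists_isNeg_negAdj_update_insert hw hwneg ⟨hv, by linarith⟩ (by simp) (by simp)

end BlowupStep

theorem Blowup.connectedOn_negAdj {V : Finset ℕ} {adj : ℕ → ℕ → Prop} {lab : ℕ → ℤ}
    (h : Blowup V adj lab) : ConnectedOn (negAdj V adj lab) (IsNeg V lab) := by
  induction h with
  | base v =>
    rintro x y ⟨hx, -⟩ ⟨hy, -⟩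
    rw [Finset.mem_singleton] at hx hy
    rw [hx, hy]
  | leaf v w hv hw _ ih => exact connectedOn_leaf hv hw ih
  | subdiv u v w hu hv _ hw _ ih => exact connectedOn_subdiv hu hv hw ih

theorem negative_part_connected {V : Finset ℕ} {adj : ℕ → ℕ → Prop} {lab : ℕ → ℤ}
    (h : Blowup V adj lab) :
    ∀ x y, x ∈ V → y ∈ V → lab x < 0 → lab y < 0 →
      Relation.ReflTransGen (fun a b => a ∈ V ∧ b ∈ V ∧ adj a b ∧ lab a < 0 ∧ lab b < 0) x y :=
  fun x y hx hy hxneg hyneg => h.connectedOn_negAdj x y ⟨hx, hxneg⟩ ⟨hy, hyneg⟩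
end

section
/- Let k >= 1 be an integer and e_1, ..., e_k integers with e_j >= 2. Then there do not exist integers x_1, ..., x_k such that, setting x_0 = 0 and x_{k+1} = 1, one has x_{j-1} + x_{j+1} = e_j * x_j for all 1 <= j <= k. -/
theorem no_integer_chain_solution (k : ℕ) (hk : 1 ≤ k) (e : ℕ → ℤ)
    (he : ∀ j, 1 ≤ j → j ≤ k → 2 ≤ e j) :
    ¬ ∃ x : ℕ → ℤ, x 0 = 0 ∧ x (k + 1) = 1 ∧
      ∀ j, 1 ≤ j → j ≤ k → x (j - 1) + x (j + 1) = e j * x j := by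
  rintro ⟨x, h0, hk1, hrec⟩
  by_cases h1 : 1 ≤ x 1
  · -- increasing case: x j ≥ j and x (j+1) ≥ x j + 1
    have claim : ∀ j, j ≤ k → (j : ℤ) ≤ x j ∧ x j + 1 ≤ x (j + 1) := by
      intro j
      induction j with
      | zero => intro _; simp [h0]; exact h1
      | succ n ih =>
        intro hle
        obtain ⟨hn0, hn1⟩ := ih (Nat.le_of_succ_le hle)
        have hxn1 : (n : ℤ) + 1 ≤ x (n + 1) := by linarith
        refine ⟨by push_cast; linarith, ?_⟩
        have hr := hrec (n + 1) (Nat.le_add_left 1 n) hle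
        simp only [Nat.add_sub_cancel] at hr
        have he' := he (n + 1) (Nat.le_add_left 1 n) hle
        have hpos : (0 : ℤ) ≤ x (n + 1) := by linarith [Int.ofNat_nonneg n]
        nlinarith [mul_le_mul_of_nonneg_right he' hpos]
    obtain ⟨hk0, hkk⟩ := claim k le_rfl
    rw [hk1] at hkk
    have : (1 : ℤ) ≤ (k : ℤ) := by exact_mod_cast hk
    linarith
  · push_neg at h1
    have h1' : x 1 ≤ 0 := by linarith
    have claim : ∀ j, j ≤ k → x (j + 1) ≤ x j ∧ x j ≤ 0 := by
      intro j
      induction j with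
      | zero => intro _; simp [h0]; exact h1'
      | succ n ih =>
        intro hle
        obtain ⟨hn1, hn0⟩ := ih (Nat.le_of_succ_le hle)
        have hx1 : x (n + 1) ≤ 0 := le_trans hn1 hn0
        refine ⟨?_, hx1⟩
        have hr := hrec (n + 1) (Nat.le_add_left 1 n) hle
        simp only [Nat.add_sub_cancel] at hr
        have he' := he (n + 1) (Nat.le_add_left 1 n) hle
        nlinarith
    obtain ⟨hkk, hk0⟩ := claim k le_rfl
    rw [hk1] at hkk
    linarith
end
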